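/- arXiv:math/0508036 — 2 statements merged into one kernel-verified Lean document; each statement's English description precedes it below -/
import Mathlib

section
/- The function f(x) = sinh(x)^2 / cosh(θ x), for a fixed parameter θ with 0 ≤ θ ≤ 1/2, is strictly increasing on (0, ∞), tends to 0 as x → 0⁺, and tends to +∞ as x → +∞. Consequently, for every c > 0 there exists a unique x > 0 with sinh(x)^2 / cosh(θ x) = c. -/
/-!
Writing `g(x) = sinh x ^ 2 / cosh (θ x)`, the numerator of `g'` is
`sinh x * (2 cosh x cosh (θ x) - θ sinh x sinh (θ x))`, and the addition formulas turn the second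
factor into `((2 - θ) cosh (x + θ x) + (2 + θ) cosh (x - θ x)) / 2`, which is positive for
`|θ| ≤ 2`; so `g` is strictly increasing on `[0, ∞)`. For `|θ| ≤ 1` we have
`cosh (θ x) ≤ cosh x`, whence `g x ≥ sinh x ^ 2 / cosh x ≥ cosh x - 1 → ∞`. Since `g 0 = 0`,
the intermediate value theorem gives every positive value, exactly once by monotonicity.
-/

open Real Filter Set Topology

theorem StrictMonoOn.existsUnique_eq_of_tendsto_nhdsGT_of_tendsto_atTop {α δ : Type*}
    [ConditionallyCompleteLinearOrder α] [TopologicalSpace α] [OrderTopology α]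
    [DenselyOrdered α] [NoMaxOrder α] [LinearOrder δ] [TopologicalSpace δ]
    [OrderClosedTopology δ] {f : α → δ} {a : α} {l c : δ}
    (hmono : StrictMonoOn f (Ioi a)) (hcont : ContinuousOn f (Ioi a))
    (ha : Tendsto f (𝓝[>] a) (𝓝 l)) (htop : Tendsto f atTop atTop) (hc : l < c) :
    ∃! x, a < x ∧ f x = c := by
  obtain ⟨x, hx, hfx⟩ := isPreconnected_Ioi.intermediate_value_Ioi (l₁ := 𝓝[>] a) inf_le_right
    (le_principal_iff.2 (Ioi_mem_atTop a)) hcont ha htop hc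
  exact ⟨x, ⟨hx, hfx⟩, fun y ⟨hy, hfy⟩ => hmono.injOn hy hx (hfy.trans hfx.symm)⟩

namespace Real

theorem tendsto_cosh_atTop : Tendsto cosh atTop atTop :=
  tendsto_atTop_mono (fun x => by rw [cosh_eq]; linarith [exp_pos (-x)])
    (tendsto_exp_atTop.atTop_div_const two_pos)

theorem two_mul_cosh_mul_cosh_sub_mul_sinh_mul_sinh_pos {θ : ℝ} (hθ : |θ| ≤ 2) (x y : ℝ) :
    0 < 2 * cosh x * cosh y - θ * (sinh x * sinh y) := by
  obtain ⟨hθl, hθr⟩ := abs_le.1 hθ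
  have hsum : 2 * cosh x * cosh y - θ * (sinh x * sinh y) =
      ((2 - θ) * cosh (x + y) + (2 + θ) * cosh (x - y)) / 2 := by
    rw [cosh_add, cosh_sub]; ring
  have hplus := cosh_pos (x + y)
  have hminus := cosh_pos (x - y)
  rw [hsum]
  rcases le_total θ 0 with hθ0 | hθ0 <;> nlinarith

theorem continuous_sinh_sq_div_cosh_mul (θ : ℝ) :
    Continuous fun x => sinh x ^ 2 / cosh (θ * x) := by
  fun_prop (disch := exact fun x => (cosh_pos _).ne')

theorem hasDerivAt_sinh_sq_div_cosh_mul (θ x : ℝ) :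
    HasDerivAt (fun x => sinh x ^ 2 / cosh (θ * x))
      (sinh x * (2 * cosh x * cosh (θ * x) - θ * (sinh x * sinh (θ * x))) / cosh (θ * x) ^ 2) x := by
  have hcosh : HasDerivAt (fun x => cosh (θ * x)) (sinh (θ * x) * θ) x := by
    simpa using ((hasDerivAt_id x).const_mul θ).cosh
  refine (((hasDerivAt_sinh x).fun_pow 2).fun_div hcosh (cosh_pos _).ne').congr_deriv ?_
  norm_num
  ring

theorem strictMonoOn_sinh_sq_div_cosh_mul {θ : ℝ} (hθ : |θ| ≤ 2) :
    StrictMonoOn (fun x => sinh x ^ 2 / cosh (θ * x)) (Ici 0) := by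
  refine strictMonoOn_of_deriv_pos (convex_Ici 0)
    (continuous_sinh_sq_div_cosh_mul θ).continuousOn fun x hx => ?_
  rw [interior_Ici] at hx
  rw [(hasDerivAt_sinh_sq_div_cosh_mul θ x).deriv]
  exact div_pos (mul_pos (sinh_pos_iff.2 hx)
    (two_mul_cosh_mul_cosh_sub_mul_sinh_mul_sinh_pos hθ _ _)) (pow_pos (cosh_pos _) 2)

theorem cosh_sub_one_le_sinh_sq_div_cosh_mul {θ : ℝ} (hθ : |θ| ≤ 1) (x : ℝ) :
    cosh x - 1 ≤ sinh x ^ 2 / cosh (θ * x) := by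
  have hθx : cosh (θ * x) ≤ cosh x := by
    rw [cosh_le_cosh, abs_mul]
    exact mul_le_of_le_one_left (abs_nonneg x) hθ
  calc cosh x - 1 ≤ sinh x ^ 2 / cosh x := by
        rw [le_div_iff₀ (cosh_pos x), sinh_sq]
        nlinarith [one_le_cosh x]
    _ ≤ sinh x ^ 2 / cosh (θ * x) := div_le_div_of_nonneg_left (sq_nonneg _) (cosh_pos _) hθx

theorem tendsto_sinh_sq_div_cosh_mul_atTop {θ : ℝ} (hθ : |θ| ≤ 1) :
    Tendsto (fun x => sinh x ^ 2 / cosh (θ * x)) atTop atTop :=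
  tendsto_atTop_mono (cosh_sub_one_le_sinh_sq_div_cosh_mul hθ)
    (tendsto_atTop_add_const_right _ (-1) tendsto_cosh_atTop)

end Real

/-- For fixed `θ ∈ [0, 1/2]`, the function `x ↦ sinh(x)^2 / cosh(θx)` is strictly
increasing on `(0, ∞)`, tends to `0` as `x → 0⁺`, tends to `+∞` as `x → +∞`, and
takes every positive value exactly once on `(0, ∞)`. -/
theorem sinh_sq_div_cosh_strictMono (θ : ℝ) (hθ0 : 0 ≤ θ) (hθ : θ ≤ 1 / 2) :
    StrictMonoOn (fun x : ℝ => Real.sinh x ^ 2 / Real.cosh (θ * x)) (Set.Ioi 0) ∧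
    Filter.Tendsto (fun x : ℝ => Real.sinh x ^ 2 / Real.cosh (θ * x))
      (nhdsWithin 0 (Set.Ioi 0)) (nhds 0) ∧
    Filter.Tendsto (fun x : ℝ => Real.sinh x ^ 2 / Real.cosh (θ * x))
      Filter.atTop Filter.atTop ∧
    ∀ c : ℝ, 0 < c → ∃! x : ℝ, 0 < x ∧ Real.sinh x ^ 2 / Real.cosh (θ * x) = c := by
  have hθ1 : |θ| ≤ 1 := abs_le.2 ⟨by linarith, by linarith⟩
  have hmono := (strictMonoOn_sinh_sq_div_cosh_mul (hθ1.trans one_le_two)).mono Ioi_subset_Ici_self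
  have hcont := continuous_sinh_sq_div_cosh_mul θ
  have hzero : Tendsto (fun x => sinh x ^ 2 / cosh (θ * x)) (𝓝[>] 0) (𝓝 0) :=
    (hcont.tendsto' 0 0 (by simp)).mono_left nhdsWithin_le_nhds
  have htop := tendsto_sinh_sq_div_cosh_mul_atTop hθ1
  exact ⟨hmono, hzero, htop, fun c hc =>
    hmono.existsUnique_eq_of_tendsto_nhdsGT_of_tendsto_atTop hcont.continuousOn hzero htop hc⟩
end

section
/- Let G₁ = ⟨a, b, y | aba = bab, y a y⁻¹ = a⁻¹, y b y⁻¹ = b⁻¹, y² = 1, (aba)⁴ = 1⟩ and G₂ = ⟨s, t, n | s³t⁻² = 1 (equivalently s³ = t²), n t n⁻¹ t = 1, n s t n⁻¹ s t = 1, n² = 1, t⁴ = 1, s⁶ = 1⟩. Then the assignment n ↦ y, t ↦ aba, s ↦ ab extends to a group isomorphism G₂ ≅ G₁. -/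
/-- Relations of the Birman–Chillingworth presentation
`⟨a, b, y | aba = bab, yay⁻¹ = a⁻¹, yby⁻¹ = b⁻¹, y² = 1, (aba)⁴ = 1⟩`,
with generators `a = 0`, `b = 1`, `y = 2`. -/
def relsBC : Set (FreeGroup (Fin 3)) :=
  {FreeGroup.of 0 * FreeGroup.of 1 * FreeGroup.of 0 *
      (FreeGroup.of 1 * FreeGroup.of 0 * FreeGroup.of 1)⁻¹,
   FreeGroup.of 2 * FreeGroup.of 0 * (FreeGroup.of 2)⁻¹ * FreeGroup.of 0,
   FreeGroup.of 2 * FreeGroup.of 1 * (FreeGroup.of 2)⁻¹ * FreeGroup.of 1,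
   FreeGroup.of 2 ^ 2,
   (FreeGroup.of 0 * FreeGroup.of 1 * FreeGroup.of 0) ^ 4}

/-- Relations of the presentation of `GL(2,ℤ)`:
`⟨s, t, n | s³t⁻² = 1, ntn⁻¹t = 1, nstn⁻¹st = 1, n² = 1, t⁴ = 1, s⁶ = 1⟩`,
with generators `s = 0`, `t = 1`, `n = 2`. -/
def relsGL : Set (FreeGroup (Fin 3)) :=
  {FreeGroup.of 0 ^ 3 * (FreeGroup.of 1 ^ 2)⁻¹,
   FreeGroup.of 2 * FreeGroup.of 1 * (FreeGroup.of 2)⁻¹ * FreeGroup.of 1,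
   FreeGroup.of 2 * FreeGroup.of 0 * FreeGroup.of 1 * (FreeGroup.of 2)⁻¹ *
      FreeGroup.of 0 * FreeGroup.of 1,
   FreeGroup.of 2 ^ 2,
   FreeGroup.of 1 ^ 4,
   FreeGroup.of 0 ^ 6}

namespace PresIsoAux

lemma rel_one {α : Type*} {rels : Set (FreeGroup α)} {r : FreeGroup α} (h : r ∈ rels) :
    PresentedGroup.mk rels r = 1 :=
  (QuotientGroup.eq_one_iff r).2 (Subgroup.subset_normalClosure h)

lemma mk_of {α : Type*} {rels : Set (FreeGroup α)} (x : α) :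
    PresentedGroup.mk rels (FreeGroup.of x) = PresentedGroup.of x := rfl

section BCtoGL
variable {G : Type*} [Group G] {a b y : G}
variable (h1 : a * b * a = b * a * b) (h2 : y * a * y⁻¹ = a⁻¹) (h3 : y * b * y⁻¹ = b⁻¹)

include h2 h3 in
lemma conj3 : y * (a * b * a) * y⁻¹ = a⁻¹ * b⁻¹ * a⁻¹ := by
  have e : y * (a * b * a) * y⁻¹ = (y * a * y⁻¹) * (y * b * y⁻¹) * (y * a * y⁻¹) := by group
  rw [e, h2, h3]

include h2 h3 in
lemma conj5 : y * (a * b * a * b * a) * y⁻¹ = a⁻¹ * b⁻¹ * a⁻¹ * b⁻¹ * a⁻¹ := by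
  have e : y * (a * b * a * b * a) * y⁻¹ =
      (y * a * y⁻¹) * (y * b * y⁻¹) * (y * a * y⁻¹) * (y * b * y⁻¹) * (y * a * y⁻¹) := by group
  rw [e, h2, h3]

include h1 in
lemma key1 : (a * b) ^ 3 = (a * b * a) ^ 2 := by
  have e : (a * b * a) * (b * a * b) = (a * b * a) * (a * b * a) := by rw [← h1]
  calc (a * b) ^ 3 = (a * b * a) * (b * a * b) := by
        rw [pow_succ, pow_succ, pow_one]; group
    _ = (a * b * a) * (a * b * a) := e
    _ = (a * b * a) ^ 2 := by rw [sq]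

include h1 in
lemma GL1 : a * b * (a * b) * (a * b) * (a * b * a * (a * b * a))⁻¹ = 1 := by
  rw [mul_inv_eq_one]
  calc a * b * (a * b) * (a * b) = (a * b) ^ 3 := by
        rw [pow_succ, pow_succ, pow_one]
    _ = (a * b * a) ^ 2 := key1 h1
    _ = a * b * a * (a * b * a) := sq _

include h2 h3 in
lemma GL2 : y * (a * b * a) * y⁻¹ * (a * b * a) = 1 := by
  rw [conj3 h2 h3]; group

include h2 h3 in
lemma GL3 : y * (a * b) * (a * b * a) * y⁻¹ * (a * b) * (a * b * a) = 1 := by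
  have e : y * (a * b) * (a * b * a) * y⁻¹ * (a * b) * (a * b * a) =
      (y * (a * b * a * b * a) * y⁻¹) * (a * b * a * b * a) := by group
  rw [e, conj5 h2 h3]; group

lemma GL5 (h5 : (a * b * a) ^ 4 = 1) :
    a * b * a * (a * b * a) * (a * b * a) * (a * b * a) = 1 := by
  calc a * b * a * (a * b * a) * (a * b * a) * (a * b * a) = (a * b * a) ^ 4 := by
        rw [pow_succ, pow_succ, pow_succ, pow_one]
    _ = 1 := h5

include h1 in
lemma GL6 (h5 : (a * b * a) ^ 4 = 1) :
    a * b * (a * b) * (a * b) * (a * b) * (a * b) * (a * b) = 1 := by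
  calc a * b * (a * b) * (a * b) * (a * b) * (a * b) * (a * b) = ((a * b) ^ 3) ^ 2 := by
        rw [← pow_mul]
        rw [pow_succ, pow_succ, pow_succ, pow_succ, pow_succ, pow_one]
    _ = ((a * b * a) ^ 2) ^ 2 := by rw [key1 h1]
    _ = (a * b * a) ^ 4 := by rw [← pow_mul]
    _ = 1 := h5
end BCtoGL

section GLtoBC
variable {G : Type*} [Group G] {s t n : G}
variable (g1 : s ^ 3 = t ^ 2) (g2 : n * t * n⁻¹ = t⁻¹) (g3 : n * s * n⁻¹ = t⁻¹ * s⁻¹ * t)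

include g1 in
lemma BC1 : s⁻¹ * t * (t⁻¹ * s * s) * (s⁻¹ * t) *
    (t⁻¹ * s * s * (s⁻¹ * t) * (t⁻¹ * s * s))⁻¹ = 1 := by
  rw [mul_inv_eq_one]
  have e : s * s * s = t * t := by
    have : s ^ 3 = t ^ 2 := g1
    rw [pow_succ, pow_succ, pow_one, sq] at this
    exact this
  calc s⁻¹ * t * (t⁻¹ * s * s) * (s⁻¹ * t) = t := by group
    _ = t⁻¹ * (t * t) := by group
    _ = t⁻¹ * (s * s * s) := by rw [e]
    _ = t⁻¹ * s * s * (s⁻¹ * t) * (t⁻¹ * s * s) := by group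

include g2 g3 in
lemma BC2 : n * (s⁻¹ * t) * n⁻¹ * (s⁻¹ * t) = 1 := by
  have e : n * (s⁻¹ * t) * n⁻¹ * (s⁻¹ * t) =
      (n * s * n⁻¹)⁻¹ * (n * t * n⁻¹) * (s⁻¹ * t) := by group
  rw [e, g2, g3]; group

include g2 g3 in
lemma BC3 : n * (t⁻¹ * s * s) * n⁻¹ * (t⁻¹ * s * s) = 1 := by
  have e : n * (t⁻¹ * s * s) * n⁻¹ * (t⁻¹ * s * s) =
      (n * t * n⁻¹)⁻¹ * (n * s * n⁻¹) * (n * s * n⁻¹) * (t⁻¹ * s * s) := by group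
  rw [e, g2, g3]; group

lemma BC5 (g5 : t ^ 4 = 1) :
    s⁻¹ * t * (t⁻¹ * s * s) * (s⁻¹ * t) * (s⁻¹ * t * (t⁻¹ * s * s) * (s⁻¹ * t)) *
      (s⁻¹ * t * (t⁻¹ * s * s) * (s⁻¹ * t)) * (s⁻¹ * t * (t⁻¹ * s * s) * (s⁻¹ * t)) = 1 := by
  calc s⁻¹ * t * (t⁻¹ * s * s) * (s⁻¹ * t) * (s⁻¹ * t * (t⁻¹ * s * s) * (s⁻¹ * t)) *
      (s⁻¹ * t * (t⁻¹ * s * s) * (s⁻¹ * t)) * (s⁻¹ * t * (t⁻¹ * s * s) * (s⁻¹ * t))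
      = t * t * t * t := by group
    _ = t ^ 4 := by rw [pow_succ, pow_succ, pow_succ, pow_one]
    _ = 1 := g5
end GLtoBC

/-- images of `s, t, n` in the BC group -/
noncomputable def fGL : Fin 3 → PresentedGroup relsBC :=
  ![PresentedGroup.of 0 * PresentedGroup.of 1,
    PresentedGroup.of 0 * PresentedGroup.of 1 * PresentedGroup.of 0,
    PresentedGroup.of 2]

/-- images of `a, b, y` in the GL group -/
noncomputable def fBC : Fin 3 → PresentedGroup relsGL :=
  ![(PresentedGroup.of 0)⁻¹ * PresentedGroup.of 1,
    (PresentedGroup.of 1)⁻¹ * PresentedGroup.of 0 * PresentedGroup.of 0,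
    PresentedGroup.of 2]

lemma fGL_rels : ∀ r ∈ relsGL, FreeGroup.lift fGL r = 1 := by
  -- first extract the BC relations
  have e1 := rel_one (rels := relsBC) (Set.mem_insert _ _)
  have e2 := rel_one (rels := relsBC)
    (Set.mem_insert_of_mem _ (Set.mem_insert _ _))
  have e3 := rel_one (rels := relsBC)
    (Set.mem_insert_of_mem _ (Set.mem_insert_of_mem _ (Set.mem_insert _ _)))
  have e4 := rel_one (rels := relsBC)
    (Set.mem_insert_of_mem _ (Set.mem_insert_of_mem _ (Set.mem_insert_of_mem _
      (Set.mem_insert _ _))))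
  have e5 := rel_one (rels := relsBC)
    (Set.mem_insert_of_mem _ (Set.mem_insert_of_mem _ (Set.mem_insert_of_mem _
      (Set.mem_insert_of_mem _ (Set.mem_singleton _)))))
  simp only [map_mul, map_inv, map_pow, mk_of] at e1 e2 e3 e4 e5
  have h1 : PresentedGroup.of (rels := relsBC) 0 * .of 1 * .of 0 = .of 1 * .of 0 * .of 1 :=
    mul_inv_eq_one.mp e1
  have h2 : PresentedGroup.of (rels := relsBC) 2 * .of 0 * (.of 2)⁻¹ = (.of 0)⁻¹ :=
    mul_eq_one_iff_eq_inv.mp e2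
  have h3 : PresentedGroup.of (rels := relsBC) 2 * .of 1 * (.of 2)⁻¹ = (.of 1)⁻¹ :=
    mul_eq_one_iff_eq_inv.mp e3
  intro r hr
  simp only [relsGL, Set.mem_insert_iff, Set.mem_singleton_iff] at hr
  rcases hr with rfl | rfl | rfl | rfl | rfl | rfl <;>
    simp only [map_mul, map_inv, map_pow, FreeGroup.lift_apply_of, fGL,
      Matrix.cons_val_zero, Matrix.cons_val_one, Matrix.head_cons, Matrix.cons_val_two,
      Matrix.tail_cons, pow_succ, pow_zero, one_mul]
  · exact GL1 h1
  · exact GL2 h2 h3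
  · exact GL3 h2 h3
  · rw [← sq]; exact e4
  · exact GL5 e5
  · exact GL6 h1 e5

lemma fBC_rels : ∀ r ∈ relsBC, FreeGroup.lift fBC r = 1 := by
  have e1 := rel_one (rels := relsGL) (Set.mem_insert _ _)
  have e2 := rel_one (rels := relsGL)
    (Set.mem_insert_of_mem _ (Set.mem_insert _ _))
  have e3 := rel_one (rels := relsGL)
    (Set.mem_insert_of_mem _ (Set.mem_insert_of_mem _ (Set.mem_insert _ _)))
  have e4 := rel_one (rels := relsGL)
    (Set.mem_insert_of_mem _ (Set.mem_insert_of_mem _ (Set.mem_insert_of_mem _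
      (Set.mem_insert _ _))))
  have e5 := rel_one (rels := relsGL)
    (Set.mem_insert_of_mem _ (Set.mem_insert_of_mem _ (Set.mem_insert_of_mem _
      (Set.mem_insert_of_mem _ (Set.mem_insert _ _)))))
  have e6 := rel_one (rels := relsGL)
    (Set.mem_insert_of_mem _ (Set.mem_insert_of_mem _ (Set.mem_insert_of_mem _
      (Set.mem_insert_of_mem _ (Set.mem_insert_of_mem _ (Set.mem_singleton _))))))
  simp only [map_mul, map_inv, map_pow, mk_of] at e1 e2 e3 e4 e5 e6
  have g1 : PresentedGroup.of (rels := relsGL) 0 ^ 3 = .of 1 ^ 2 := mul_inv_eq_one.mp e1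
  have g2 : PresentedGroup.of (rels := relsGL) 2 * .of 1 * (.of 2)⁻¹ = (.of 1)⁻¹ :=
    mul_eq_one_iff_eq_inv.mp e2
  have g3 : PresentedGroup.of (rels := relsGL) 2 * .of 0 * (.of 2)⁻¹ =
      (.of 1)⁻¹ * (.of 0)⁻¹ * .of 1 := by
    have h := mul_eq_one_iff_eq_inv.mp e3
    calc PresentedGroup.of (rels := relsGL) 2 * .of 0 * (.of 2)⁻¹
        = (PresentedGroup.of (rels := relsGL) 2 * .of 0 * .of 1 * (.of 2)⁻¹ * .of 0) *
            (.of 0)⁻¹ * ((PresentedGroup.of (rels := relsGL) 2 * .of 1 * (.of 2)⁻¹) *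
            (.of 2) * (.of 2)⁻¹)⁻¹ := by group
      _ = (PresentedGroup.of (rels := relsGL) 1)⁻¹ * (.of 0)⁻¹ * .of 1 := by
            rw [h, g2]; group
  intro r hr
  simp only [relsBC, Set.mem_insert_iff, Set.mem_singleton_iff] at hr
  rcases hr with rfl | rfl | rfl | rfl | rfl <;>
    simp only [map_mul, map_inv, map_pow, FreeGroup.lift_apply_of, fBC,
      Matrix.cons_val_zero, Matrix.cons_val_one, Matrix.head_cons, Matrix.cons_val_two,
      Matrix.tail_cons, pow_succ, pow_zero, one_mul]
  · exact BC1 g1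
  · exact BC2 g2 g3
  · exact BC3 g2 g3
  · rw [← sq]; exact e4
  · exact BC5 e5

noncomputable def phi : PresentedGroup relsGL →* PresentedGroup relsBC :=
  PresentedGroup.toGroup fGL_rels

noncomputable def psi : PresentedGroup relsBC →* PresentedGroup relsGL :=
  PresentedGroup.toGroup fBC_rels

lemma phi_of (x : Fin 3) : phi (PresentedGroup.of x) = fGL x := PresentedGroup.toGroup.of _

lemma psi_of (x : Fin 3) : psi (PresentedGroup.of x) = fBC x := PresentedGroup.toGroup.of _

lemma psi_phi : psi.comp phi = MonoidHom.id _ := by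
  apply PresentedGroup.ext
  intro x
  fin_cases x <;>
    simp [MonoidHom.comp_apply, phi_of, psi_of, fGL, fBC] <;> group

lemma phi_psi : phi.comp psi = MonoidHom.id _ := by
  apply PresentedGroup.ext
  intro x
  fin_cases x <;>
    simp [MonoidHom.comp_apply, phi_of, psi_of, fGL, fBC] <;> group

end PresIsoAux

open PresIsoAux in
/-- The assignment `n ↦ y`, `t ↦ aba`, `s ↦ ab` extends to a group isomorphism between
the two presented groups. -/
theorem presentedGroup_iso :
    ∃ e : PresentedGroup relsGL ≃* PresentedGroup relsBC,
      e (PresentedGroup.of 2) = PresentedGroup.of 2 ∧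
      e (PresentedGroup.of 1) =
        PresentedGroup.of 0 * PresentedGroup.of 1 * PresentedGroup.of 0 ∧
      e (PresentedGroup.of 0) = PresentedGroup.of 0 * PresentedGroup.of 1 := by
  refine ⟨MonoidHom.toMulEquiv phi psi psi_phi phi_psi, ?_, ?_, ?_⟩
  · show phi (PresentedGroup.of 2) = _
    rw [phi_of]; simp [fGL]
  · show phi (PresentedGroup.of 1) = _
    rw [phi_of]; simp [fGL]
  · show phi (PresentedGroup.of 0) = _
    rw [phi_of]; simp [fGL]
end
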